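/- Let a > 0 and t ≥ 0 be fixed, n ≥ 1, and define for pairwise distinct small nonzero reals ε_2, ..., ε_n the expression S(ε) = f(a)/∏_{j>1}((-1)^{n-1} ε_j) + ∑_{i=2}^n f(a+ε_i)/(ε_i ∏_{j>1, j≠i}(ε_i - ε_j)), where f(P) = P^{n-1} e^{-t/P}. Then S(ε) tends to f^{(n-1)}(a)/(n-1)! = e^{-t/a} ∑_{i=0}^{n-1} (t/a)^i / i! as all ε_i → 0. -/

import Mathlib

open Finset Filter Topology

/-! The sum `S(ε)` is the divided difference `f[a, a + ε₁, …, a + εₙ₋₁]` of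
`f(P) = P ^ (n - 1) * exp (-t / P)`. By the mean value theorem for divided differences
(Rolle's theorem applied `n - 1` times to `f` minus its interpolating polynomial) it equals
`f⁽ⁿ⁻¹⁾(ξ) / (n - 1)!` for some `ξ` between the nodes, so `ξ → a` as `ε → 0`. Finally
`f⁽ᵐ⁾(x) / m! = exp (-t / x) * ∑_{i ≤ m} (t / x) ^ i / i!`, by induction on `m` through
`(x * g)⁽ᵐ⁺¹⁾ = x * g⁽ᵐ⁺¹⁾ + (m + 1) * g⁽ᵐ⁾` and
`(x ^ m * exp (-t / x))⁽ᵐ⁺¹⁾ = exp (-t / x) * t ^ (m + 1) / x ^ (m + 2)`. -/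

/-- No differentiability is needed: where `f` is not differentiable, `deriv f` is `0` anyway. -/
theorem exists_finset_deriv_eq_zero {f : ℝ → ℝ} {V : Set ℝ} (hV : V.OrdConnected)
    (hf : ContinuousOn f V) {s : Finset ℝ} (hsV : ↑s ⊆ V) (hs : ∀ x ∈ s, f x = 0) :
    ∃ t : Finset ℝ, ↑t ⊆ V ∧ #s ≤ #t + 1 ∧ ∀ z ∈ t, deriv f z = 0 := by
  have rolle : ∀ p : ℝ × ℝ, ∃ z, p.1 ∈ s → p.2 ∈ s → p.1 < p.2 →
      z ∈ Set.Ioo p.1 p.2 ∧ deriv f z = 0 := fun ⟨x, y⟩ ↦ by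
    by_cases h : x ∈ s ∧ y ∈ s ∧ x < y
    · obtain ⟨hx, hy, hxy⟩ := h
      obtain ⟨z, hz, hz'⟩ := exists_deriv_eq_zero hxy
        (hf.mono (hV.out (hsV hx) (hsV hy))) ((hs x hx).trans (hs y hy).symm)
      exact ⟨z, fun _ _ _ ↦ ⟨hz, hz'⟩⟩
    · exact ⟨0, fun hx hy hxy ↦ (h ⟨hx, hy, hxy⟩).elim⟩
  choose g hg using rolle
  refine ⟨((s ×ˢ s).filter fun p ↦ p.1 < p.2).image g, ?_, ?_, ?_⟩
  · simp only [coe_image, coe_filter, Set.image_subset_iff]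
    rintro ⟨x, y⟩ ⟨hxy, hlt⟩
    rw [mem_product] at hxy
    exact hV.out (hsV hxy.1) (hsV hxy.2) (Set.Ioo_subset_Icc_self (hg _ hxy.1 hxy.2 hlt).1)
  · refine card_le_of_interleaved fun x hx y hy hxy _ ↦ ⟨g (x, y), ?_, (hg (x, y) hx hy hxy).1⟩
    exact mem_image_of_mem _ (mem_filter.2 ⟨mem_product.2 ⟨hx, hy⟩, hxy⟩)
  · simp only [mem_image, mem_filter, mem_product]
    rintro _ ⟨⟨x, y⟩, ⟨⟨hx, hy⟩, hxy⟩, rfl⟩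
    exact (hg _ hx hy hxy).2

theorem exists_iteratedDeriv_eq_zero {f : ℝ → ℝ} {U V : Set ℝ} (hU : IsOpen U)
    (hV : V.OrdConnected) (hVU : V ⊆ U) {k : ℕ} (hf : ContDiffOn ℝ k f U) {s : Finset ℝ}
    (hsV : ↑s ⊆ V) (hk : k < #s) (hs : ∀ x ∈ s, f x = 0) :
    ∃ ξ ∈ V, iteratedDeriv k f ξ = 0 := by
  induction k generalizing f s with
  | zero =>
    obtain ⟨x, hx⟩ := card_pos.1 hk
    exact ⟨x, hsV hx, by simpa using hs x hx⟩
  | succ k ih =>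
    obtain ⟨t, htV, hst, ht⟩ := exists_finset_deriv_eq_zero hV (hf.continuousOn.mono hVU) hsV hs
    have hf' : ContDiffOn ℝ k (deriv f) U := hf.deriv_of_isOpen hU (by push_cast; rfl)
    obtain ⟨ξ, hξ, hξ0⟩ := ih hf' htV (by omega) ht
    exact ⟨ξ, hξ, by rwa [iteratedDeriv_succ']⟩

section Interpolation

open Polynomial

theorem Polynomial.iteratedDeriv_eval {𝕜 : Type*} [NontriviallyNormedField 𝕜] (p : 𝕜[X])
    (k : ℕ) (x : 𝕜) :
    iteratedDeriv k (fun x ↦ p.eval x) x = (derivative^[k] p).eval x := by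
  induction k generalizing p with
  | zero => simp
  | succ k ih =>
    rw [iteratedDeriv_succ', Function.iterate_succ_apply, ← ih]
    congr 1 with y
    exact p.deriv

theorem Lagrange.eval_iterate_derivative_interpolate {F ι : Type*} [Field F] [Fintype ι]
    [DecidableEq ι] {m : ℕ} (hcard : Fintype.card ι = m + 1) {v : ι → F}
    (hv : Function.Injective v) (r : ι → F) (x : F) :
    (derivative^[m] (interpolate univ v r)).eval x =
      m.factorial * ∑ i, r i / ∏ j ∈ univ.erase i, (v i - v j) := by
  have hs : #(univ : Finset ι) = m + 1 := hcard
  rw [eval_iterate_derivative_eq_sum hv.injOn (degree_interpolate_lt _ hv.injOn) (by omega)]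
  congr 1
  refine sum_congr rfl fun i _ ↦ ?_
  rw [eval_interpolate_at_node _ hv.injOn (mem_univ i)]
  simp [hs]

theorem exists_sum_div_prod_sub_eq_iteratedDeriv {ι : Type*} [Fintype ι] [DecidableEq ι]
    {m : ℕ} (hcard : Fintype.card ι = m + 1) {f : ℝ → ℝ} {U V : Set ℝ} (hU : IsOpen U)
    (hV : V.OrdConnected) (hVU : V ⊆ U) (hf : ContDiffOn ℝ m f U) {v : ι → ℝ}
    (hv : Function.Injective v) (hvV : ∀ i, v i ∈ V) :
    ∃ ξ ∈ V, ∑ i, f (v i) / ∏ j ∈ univ.erase i, (v i - v j) =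
      iteratedDeriv m f ξ / m.factorial := by
  set P := Lagrange.interpolate univ v (f ∘ v)
  have hP : ContDiff ℝ m fun x ↦ P.eval x := P.contDiff_aeval (m : WithTop ℕ∞)
  have hzero : ∀ x ∈ univ.image v, f x - P.eval x = 0 := by
    simp only [mem_image, mem_univ, true_and, forall_exists_index, forall_apply_eq_imp_iff]
    intro i
    rw [Lagrange.eval_interpolate_at_node _ hv.injOn (mem_univ i), Function.comp_apply, sub_self]
  obtain ⟨ξ, hξV, hξ⟩ := exists_iteratedDeriv_eq_zero hU hV hVU
    (hf.sub hP.contDiffOn) (by simpa [Set.range_subset_iff] using hvV)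
    (by rw [card_image_of_injective _ hv, card_univ, hcard]; omega) hzero
  refine ⟨ξ, hξV, ?_⟩
  rw [iteratedDeriv_fun_sub (hf.contDiffAt (hU.mem_nhds (hVU hξV))) hP.contDiffAt,
    iteratedDeriv_eval, Lagrange.eval_iterate_derivative_interpolate hcard hv, sub_eq_zero] at hξ
  rw [hξ, mul_div_cancel_left₀ _ (by positivity)]
  rfl

end Interpolation

theorem Fin.prod_univ_erase_zero {M : Type*} [CommMonoid M] {m : ℕ} (g : Fin (m + 1) → M) :
    ∏ j ∈ univ.erase 0, g j = ∏ j : Fin m, g j.succ := by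
  rw [← filter_ne', prod_filter, Fin.prod_univ_succ]
  simp [Fin.succ_ne_zero]

theorem Fin.prod_univ_erase_succ {M : Type*} [CommMonoid M] {m : ℕ} (g : Fin (m + 1) → M)
    (i : Fin m) : ∏ j ∈ univ.erase i.succ, g j = g 0 * ∏ j ∈ univ.erase i, g j.succ := by
  rw [← filter_ne', prod_filter, Fin.prod_univ_succ, ← filter_ne', prod_filter]
  simp [(Fin.succ_ne_zero i).symm, Fin.succ_inj]

theorem sum_div_prod_sub_vecCons {K : Type*} [Field K] {m : ℕ} (f : K → K) (x₀ : K)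
    (x : Fin m → K) :
    ∑ i, f (Matrix.vecCons x₀ x i) /
        ∏ j ∈ univ.erase i, (Matrix.vecCons x₀ x i - Matrix.vecCons x₀ x j) =
      f x₀ / ∏ j, (x₀ - x j) + ∑ i, f (x i) / ((x i - x₀) * ∏ j ∈ univ.erase i, (x i - x j)) := by
  simp [Fin.sum_univ_succ, Fin.prod_univ_erase_zero, Fin.prod_univ_erase_succ]

section PowMulExpNegDiv

open Real

theorem hasDerivAt_exp_neg_mul_sum_pow_div_factorial (m : ℕ) (u : ℝ) :
    HasDerivAt (fun u ↦ exp (-u) * ∑ i ∈ range (m + 1), u ^ i / i.factorial)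
      (-(exp (-u) * u ^ m / m.factorial)) u := by
  induction m with
  | zero => simpa using (hasDerivAt_neg u).exp
  | succ m ih =>
    simp_rw [sum_range_succ _ (m + 1), mul_add]
    have hpow : HasDerivAt (fun u ↦ u ^ (m + 1) / ((m + 1).factorial : ℝ))
        (u ^ m / m.factorial) u :=
      ((hasDerivAt_pow (m + 1) u).div_const _).congr_deriv (by
        rw [Nat.factorial_succ]; push_cast; field_simp)
    exact (ih.add ((hasDerivAt_neg u).exp.mul hpow)).congr_deriv (by ring)

theorem hasDerivAt_exp_neg_div_mul_sum_pow_div_factorial (m : ℕ) (t : ℝ) {x : ℝ} (hx : x ≠ 0) :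
    HasDerivAt (fun y ↦ exp (-t / y) * ∑ i ∈ range (m + 1), (t / y) ^ i / i.factorial)
      (exp (-t / x) * t ^ (m + 1) / (m.factorial * x ^ (m + 2))) x := by
  have hinner : HasDerivAt (fun y ↦ t / y) (-(t / x ^ 2)) x := by
    simpa [div_eq_mul_inv] using (hasDerivAt_inv hx).const_mul t
  refine (((hasDerivAt_exp_neg_mul_sum_pow_div_factorial m (t / x)).comp x hinner).congr_deriv
    ?_).congr_of_eventuallyEq (.of_forall fun y ↦ by simp [neg_div])
  rw [div_pow]
  field_simp
  ring

theorem iteratedDeriv_succ_id_mul {𝕜 : Type*} [NontriviallyNormedField 𝕜] {g : 𝕜 → 𝕜} {x : 𝕜}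
    {n : ℕ} (hg : ContDiffAt 𝕜 (n + 1) g x) :
    iteratedDeriv (n + 1) (fun y ↦ y * g y) x =
      x * iteratedDeriv (n + 1) g x + (n + 1) * iteratedDeriv n g x := by
  rw [iteratedDeriv_fun_mul (f := fun y ↦ y) contDiffAt_fun_id (by exact_mod_cast hg),
    sum_range_succ', sum_range_succ']
  simp [iteratedDeriv_fun_id, add_comm]

theorem iteratedDeriv_pow_mul_exp_neg_div (m : ℕ) (t : ℝ) {x : ℝ} (hx : 0 < x) :
    iteratedDeriv m (fun y ↦ y ^ m * exp (-t / y)) x =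
      m.factorial * (exp (-t / x) * ∑ i ∈ range (m + 1), (t / x) ^ i / i.factorial) := by
  induction m generalizing x with
  | zero => simp
  | succ m ih =>
    have hsmooth : ContDiffAt ℝ (m + 1) (fun y ↦ y ^ m * exp (-t / y)) x := by
      fun_prop (disch := exact hx.ne')
    have hnext : iteratedDeriv (m + 1) (fun y ↦ y ^ m * exp (-t / y)) x =
        exp (-t / x) * t ^ (m + 1) / x ^ (m + 2) := by
      have heq : iteratedDeriv m (fun y ↦ y ^ m * exp (-t / y)) =ᶠ[𝓝 x] fun y ↦
          m.factorial * (exp (-t / y) * ∑ i ∈ range (m + 1), (t / y) ^ i / i.factorial) :=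
        eventually_of_mem (Ioi_mem_nhds hx) fun y hy ↦ ih hy
      rw [iteratedDeriv_succ, heq.deriv_eq,
        ((hasDerivAt_exp_neg_div_mul_sum_pow_div_factorial m t hx.ne').const_mul _).deriv]
      field_simp
    calc iteratedDeriv (m + 1) (fun y ↦ y ^ (m + 1) * exp (-t / y)) x
        = iteratedDeriv (m + 1) (fun y ↦ y * (y ^ m * exp (-t / y))) x := by
          simp only [pow_succ', mul_assoc]
      _ = _ := by
          rw [iteratedDeriv_succ_id_mul hsmooth, hnext, ih hx, sum_range_succ _ (m + 1),
            div_pow t x (m + 1), Nat.factorial_succ]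
          push_cast
          field_simp
          ring

end PowMulExpNegDiv

theorem prod_neg_eq_prod_neg_one_pow_mul {R : Type*} [CommRing R] {m : ℕ} (x : Fin m → R) :
    ∏ j, -x j = ∏ j, ((-1 : R) ^ m * x j) := by
  have hpar : ((-1 : R) ^ m) ^ m = (-1) ^ m := by
    rcases Nat.even_or_odd m with hm | hm
    · rw [hm.neg_one_pow, one_pow]
    · rw [← pow_mul, hm.neg_one_pow, (hm.mul hm).neg_one_pow]
  simp only [neg_eq_neg_one_mul (x _), prod_mul_distrib, prod_const, card_univ, Fintype.card_fin,
    hpar]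

theorem exists_hypoexp_sum_eq (m : ℕ) (t : ℝ) {a : ℝ} (ha : 0 < a) {ε : Fin m → ℝ}
    (hε : ∀ i, ε i ≠ 0) (hinj : Function.Injective ε) (hpos : ∀ i, 0 < a + ε i) :
    ∃ ξ, dist ξ a ≤ ‖ε‖ ∧
      (a ^ m * Real.exp (-t / a)) / ∏ j, ((-1 : ℝ) ^ m * ε j)
          + ∑ i, ((a + ε i) ^ m * Real.exp (-t / (a + ε i))) /
              (ε i * ∏ j ∈ univ.erase i, (ε i - ε j)) =
        Real.exp (-t / ξ) * ∑ i ∈ range (m + 1), (t / ξ) ^ i / i.factorial := by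
  have hv : Function.Injective (Matrix.vecCons a fun i ↦ a + ε i) := Fin.cons_injective_iff.2
    ⟨fun ⟨i, hi⟩ ↦ hε i (by linarith), fun i j hij ↦ hinj (add_left_cancel hij)⟩
  have hvV : ∀ i, Matrix.vecCons a (fun i ↦ a + ε i) i ∈ Metric.closedBall a ‖ε‖ ∩ Set.Ioi 0 := by
    refine Fin.cases ⟨Metric.mem_closedBall_self (norm_nonneg ε), ha⟩ fun i ↦ ⟨?_, hpos i⟩
    simpa using norm_le_pi_norm ε i
  have hV : (Metric.closedBall a ‖ε‖ ∩ Set.Ioi 0).OrdConnected := by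
    rw [Real.closedBall_eq_Icc]
    exact Set.ordConnected_Icc.inter Set.ordConnected_Ioi
  have hf : ContDiffOn ℝ m (fun y ↦ y ^ m * Real.exp (-t / y)) (Set.Ioi 0) := by
    fun_prop (disch := exact fun y hy ↦ (Set.mem_Ioi.1 hy).ne')
  obtain ⟨ξ, ⟨hξa, hξ0⟩, hξ⟩ := exists_sum_div_prod_sub_eq_iteratedDeriv (Fintype.card_fin _)
    isOpen_Ioi hV Set.inter_subset_right hf hv hvV
  have hnodes := sum_div_prod_sub_vecCons (fun y ↦ y ^ m * Real.exp (-t / y)) a fun i ↦ a + ε i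
  beta_reduce at hnodes
  rw [iteratedDeriv_pow_mul_exp_neg_div m t hξ0, mul_div_cancel_left₀ _ (by positivity),
    hnodes] at hξ
  refine ⟨ξ, hξa, ?_⟩
  simpa only [sub_add_cancel_left, add_sub_cancel_left, add_sub_add_left_eq_sub,
    prod_neg_eq_prod_neg_one_pow_mul] using hξ

theorem tendsto_hypoexp_sum (m : ℕ) (t : ℝ) {a : ℝ} (ha : 0 < a) :
    Tendsto (fun ε : Fin m → ℝ ↦
        (a ^ m * Real.exp (-t / a)) / ∏ j, ((-1 : ℝ) ^ m * ε j)
          + ∑ i, ((a + ε i) ^ m * Real.exp (-t / (a + ε i))) /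
              (ε i * ∏ j ∈ univ.erase i, (ε i - ε j)))
      (𝓝[{ε | (∀ i, ε i ≠ 0) ∧ Function.Injective ε ∧ ∀ i, 0 < a + ε i}] 0)
      (𝓝 (Real.exp (-t / a) * ∑ i ∈ range (m + 1), (t / a) ^ i / i.factorial)) := by
  have hcont : ContinuousAt
      (fun x ↦ Real.exp (-t / x) * ∑ i ∈ range (m + 1), (t / x) ^ i / i.factorial) a := by
    fun_prop (disch := exact ha.ne')
  rw [Metric.tendsto_nhdsWithin_nhds]
  intro η hη
  obtain ⟨δ, hδ, hball⟩ := Metric.continuousAt_iff.1 hcont η hη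
  refine ⟨δ, hδ, fun ε ⟨hε, hinj, hpos⟩ hdist ↦ ?_⟩
  obtain ⟨ξ, hξa, hξ⟩ := exists_hypoexp_sum_eq m t ha hε hinj hpos
  rw [hξ]
  exact hball (hξa.trans_lt (by rwa [dist_zero_right] at hdist))

theorem hypoexp_degenerate_limit_general (n : ℕ) (hn : 1 ≤ n) (a t : ℝ) (ha : 0 < a) :
    Tendsto (fun ε : Fin (n - 1) → ℝ =>
        (a ^ (n - 1) * Real.exp (-t / a)) / ∏ j, ((-1 : ℝ) ^ (n - 1) * ε j)
          + ∑ i, ((a + ε i) ^ (n - 1) * Real.exp (-t / (a + ε i))) /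
              (ε i * ∏ j ∈ Finset.univ.erase i, (ε i - ε j)))
      (𝓝[{ε : Fin (n - 1) → ℝ | (∀ i, ε i ≠ 0) ∧ Function.Injective ε ∧ ∀ i, 0 < a + ε i}] 0)
      (𝓝 (Real.exp (-t / a) * ∑ i ∈ Finset.range n, (t / a) ^ i / (Nat.factorial i))) := by
  obtain ⟨m, rfl⟩ : ∃ m, n = m + 1 := ⟨n - 1, by omega⟩
  exact tendsto_hypoexp_sum m t ha

theorem hypoexp_degenerate_limit (n : ℕ) (hn : 1 ≤ n) (a t : ℝ) (ha : 0 < a) (ht : 0 ≤ t) :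
    Tendsto (fun ε : Fin (n - 1) → ℝ =>
        (a ^ (n - 1) * Real.exp (-t / a)) / ∏ j, ((-1 : ℝ) ^ (n - 1) * ε j)
          + ∑ i, ((a + ε i) ^ (n - 1) * Real.exp (-t / (a + ε i))) /
              (ε i * ∏ j ∈ Finset.univ.erase i, (ε i - ε j)))
      (𝓝[{ε : Fin (n - 1) → ℝ | (∀ i, ε i ≠ 0) ∧ Function.Injective ε ∧ ∀ i, 0 < a + ε i}] 0)
      (𝓝 (Real.exp (-t / a) * ∑ i ∈ Finset.range n, (t / a) ^ i / (Nat.factorial i))) :=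
  hypoexp_degenerate_limit_general n hn a t ha
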